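/- Let F be a Lebesgue measurable subset of ℝ. Then F is contained in a wavelet set if and only if the following four conditions hold: (1) F packs by integer translations; (2) F packs by dyadic dilations; (3) there exists a measurable set U ⊇ F that packs by integer translations and tiles ℝ by dyadic dilations; (4) there exists a measurable set V ⊇ F that packs by dyadic dilations and tiles ℝ by integer translations. Moreover, when the four conditions hold with witnesses U and V, a wavelet set W with F ⊆ W can be chosen so that W ⊆ U ∪ V. -/
import Mathlib


open MeasureTheory

/-- `W` tiles `ℝ` by integer translations: for a.e. `ξ` there is exactly one `k : ℤ`
with `ξ + k ∈ W`. -/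
def TilesByTranslations (W : Set ℝ) : Prop :=
  ∀ᵐ ξ ∂(volume : Measure ℝ), ∃! k : ℤ, ξ + (k : ℝ) ∈ W

/-- `W` tiles `ℝ` by dyadic dilations: for a.e. `ξ` there is exactly one `j : ℤ`
with `2 ^ j * ξ ∈ W`. -/
def TilesByDilations (W : Set ℝ) : Prop :=
  ∀ᵐ ξ ∂(volume : Measure ℝ), ∃! j : ℤ, (2 : ℝ) ^ j * ξ ∈ W

/-- `W` packs `ℝ` by integer translations: for a.e. `ξ` there is at most one `k : ℤ`
with `ξ + k ∈ W`. -/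
def PacksByTranslations (W : Set ℝ) : Prop :=
  ∀ᵐ ξ ∂(volume : Measure ℝ), ∀ k k' : ℤ, ξ + (k : ℝ) ∈ W → ξ + (k' : ℝ) ∈ W → k = k'

/-- `W` packs `ℝ` by dyadic dilations: for a.e. `ξ` there is at most one `j : ℤ`
with `2 ^ j * ξ ∈ W`. -/
def PacksByDilations (W : Set ℝ) : Prop :=
  ∀ᵐ ξ ∂(volume : Measure ℝ), ∀ j j' : ℤ, (2 : ℝ) ^ j * ξ ∈ W → (2 : ℝ) ^ j' * ξ ∈ W → j = j'

/-- A wavelet set: a measurable set tiling `ℝ` both by integer translations and by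
dyadic dilations. -/
def IsWaveletSet (W : Set ℝ) : Prop :=
  MeasurableSet W ∧ TilesByTranslations W ∧ TilesByDilations W

namespace WaveletAux

/-- Saturation of a set under integer translations. -/
def trsat (A : Set ℝ) : Set ℝ := {x | ∃ k : ℤ, x + (k : ℝ) ∈ A}

/-- Saturation of a set under dyadic dilations. -/
def dilsat (A : Set ℝ) : Set ℝ := {x | ∃ j : ℤ, (2 : ℝ) ^ j * x ∈ A}

lemma measurableSet_trsat {A : Set ℝ} (hA : MeasurableSet A) : MeasurableSet (trsat A) := by
  have : trsat A = ⋃ k : ℤ, (fun x : ℝ => x + (k : ℝ)) ⁻¹' A := by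
    ext x; simp [trsat]
  rw [this]
  exact MeasurableSet.iUnion fun k => hA.preimage (measurable_id.add_const _)

lemma measurableSet_dilsat {A : Set ℝ} (hA : MeasurableSet A) : MeasurableSet (dilsat A) := by
  have : dilsat A = ⋃ j : ℤ, (fun x : ℝ => (2 : ℝ) ^ j * x) ⁻¹' A := by
    ext x; simp [dilsat]
  rw [this]
  exact MeasurableSet.iUnion fun j => hA.preimage (measurable_id.const_mul _)

/-- The exchange iteration. -/
def seqS (U V : Set ℝ) : ℕ → Set ℝ
  | 0 => U
  | n + 1 =>
      (seqS U V n \ dilsat (V \ trsat (seqS U V n))) ∪ (V \ trsat (seqS U V n))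

/-- The limiting set of the exchange iteration. -/
def limW (U V : Set ℝ) : Set ℝ := (⋂ n, seqS U V n) ∪ ⋃ n, V ∩ seqS U V n

lemma measurableSet_seqS {U V : Set ℝ} (hU : MeasurableSet U) (hV : MeasurableSet V) :
    ∀ n, MeasurableSet (seqS U V n)
  | 0 => hU
  | n + 1 => by
      have h := measurableSet_seqS hU hV n
      exact ((h.diff (measurableSet_dilsat (hV.diff (measurableSet_trsat h)))).union
        (hV.diff (measurableSet_trsat h)))

lemma measurableSet_limW {U V : Set ℝ} (hU : MeasurableSet U) (hV : MeasurableSet V) :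
    MeasurableSet (limW U V) :=
  (MeasurableSet.iInter fun n => measurableSet_seqS hU hV n).union
    (MeasurableSet.iUnion fun n => hV.inter (measurableSet_seqS hU hV n))

lemma two_zpow_mul (i j : ℤ) (x : ℝ) :
    (2 : ℝ) ^ i * ((2 : ℝ) ^ j * x) = (2 : ℝ) ^ (i + j) * x := by
  rw [zpow_add₀ (by norm_num : (2:ℝ) ≠ 0)]; ring

/-- The heart of the proof: the exchange construction, carried out pointwise on a
set `G` on which all hypotheses hold exactly. -/
lemma exact_construction (G U V : Set ℝ)
    (hUG : U ⊆ G) (hVG : V ⊆ G)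
    (hU1 : ∀ x ∈ G, ∀ k k' : ℤ, x + (k : ℝ) ∈ U → x + (k' : ℝ) ∈ U → k = k')
    (hU2 : ∀ x ∈ G, ∃! j : ℤ, (2 : ℝ) ^ j * x ∈ U)
    (hV1 : ∀ x ∈ G, ∀ j j' : ℤ, (2 : ℝ) ^ j * x ∈ V → (2 : ℝ) ^ j' * x ∈ V → j = j')
    (hV2 : ∀ x ∈ G, ∃! k : ℤ, x + (k : ℝ) ∈ V) :
    (∀ x ∈ G, ∃! k : ℤ, x + (k : ℝ) ∈ limW U V) ∧
    (∀ x ∈ G, ∃! j : ℤ, (2 : ℝ) ^ j * x ∈ limW U V) ∧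
    limW U V ⊆ U ∪ V ∧ U ∩ V ⊆ limW U V := by
  set S : ℕ → Set ℝ := seqS U V with hS
  have hSsucc : ∀ n, S (n + 1) =
      (S n \ dilsat (V \ trsat (S n))) ∪ (V \ trsat (S n)) := fun n => rfl
  have hSG : ∀ n, S n ⊆ G := by
    intro n
    induction n with
    | zero => exact hUG
    | succ n ih =>
      rw [hSsucc]
      rintro x (⟨hx, -⟩ | ⟨hx, -⟩)
      · exact ih hx
      · exact hVG hx
  -- permanence of points of V
  have hperm : ∀ n, V ∩ S n ⊆ S (n + 1) := by
    rintro n v ⟨hvV, hvS⟩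
    rw [hSsucc]
    by_cases hd : v ∈ dilsat (V \ trsat (S n))
    · obtain ⟨j, hj⟩ := hd
      have hj0 : j = 0 := by
        refine hV1 v (hVG hvV) j 0 hj.1 ?_
        simpa using hvV
      subst hj0
      right
      simpa using hj
    · exact Or.inl ⟨hvS, hd⟩
  have hpermLe : ∀ n m, n ≤ m → V ∩ S n ⊆ V ∩ S m := by
    intro n m hnm
    induction hnm with
    | refl => exact le_refl _
    | @step m hm ih =>
      exact fun x hx => ⟨(ih hx).1, hperm m (ih hx)⟩
  -- U ∩ V is contained in every stage
  have hinterS : ∀ n, U ∩ V ⊆ S n := by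
    intro n
    induction n with
    | zero => exact Set.inter_subset_left
    | succ n ih => exact fun x hx => hperm n ⟨hx.2, ih hx⟩
  -- packing by translations at every stage
  have hI1 : ∀ n, ∀ x ∈ G, ∀ k k' : ℤ,
      x + (k : ℝ) ∈ S n → x + (k' : ℝ) ∈ S n → k = k' := by
    intro n
    induction n with
    | zero => exact hU1
    | succ n ih =>
      intro x hx k k' h h'
      rw [hSsucc] at h h'
      rcases h with ⟨hSk, -⟩ | hVk <;> rcases h' with ⟨hSk', -⟩ | hVk'
      · exact ih x hx k k' hSk hSk'
      · exact absurd ⟨k - k', by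
          have e : x + (k' : ℝ) + ((k - k' : ℤ) : ℝ) = x + (k : ℝ) := by push_cast; ring
          rw [e]; exact hSk⟩ hVk'.2
      · exact absurd ⟨k' - k, by
          have e : x + (k : ℝ) + ((k' - k : ℤ) : ℝ) = x + (k' : ℝ) := by push_cast; ring
          rw [e]; exact hSk'⟩ hVk.2
      · exact (hV2 x hx).unique hVk.1 hVk'.1
  -- uniqueness of dilation representatives at every stage
  have hI2u : ∀ n, ∀ x ∈ G, ∀ j j' : ℤ,
      (2 : ℝ) ^ j * x ∈ S n → (2 : ℝ) ^ j' * x ∈ S n → j = j' := by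
    intro n
    induction n with
    | zero => exact fun x hx j j' h h' => (hU2 x hx).unique h h'
    | succ n ih =>
      intro x hx j j' h h'
      rw [hSsucc] at h h'
      rcases h with ⟨hSj, hdj⟩ | hVj <;> rcases h' with ⟨hSj', hdj'⟩ | hVj'
      · exact ih x hx j j' hSj hSj'
      · exact absurd ⟨j' - j, by rw [two_zpow_mul]; rw [sub_add_cancel]; exact hVj'⟩ hdj
      · exact absurd ⟨j - j', by rw [two_zpow_mul]; rw [sub_add_cancel]; exact hVj⟩ hdj'
      · exact hV1 x hx j j' hVj.1 hVj'.1
  -- existence of dilation representatives at every stage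
  have hI2e : ∀ n, ∀ x ∈ G, ∃ j : ℤ, (2 : ℝ) ^ j * x ∈ S n := by
    intro n
    induction n with
    | zero => exact fun x hx => (hU2 x hx).exists
    | succ n ih =>
      intro x hx
      obtain ⟨j, hj⟩ := ih x hx
      by_cases hd : (2 : ℝ) ^ j * x ∈ dilsat (V \ trsat (S n))
      · obtain ⟨i, hi⟩ := hd
        rw [two_zpow_mul] at hi
        exact ⟨i + j, by rw [hSsucc]; exact Or.inr hi⟩
      · exact ⟨j, by rw [hSsucc]; exact Or.inl ⟨hj, hd⟩⟩
  -- membership in limW gives membership in all late stages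
  have hWin : ∀ n, V ∩ S n ⊆ limW U V := by
    intro n x hx
    exact Or.inr (Set.mem_iUnion.2 ⟨n, hx⟩)
  have hWall : (⋂ n, S n) ⊆ limW U V := Set.subset_union_left
  have hWstage : ∀ w ∈ limW U V, ∃ n, ∀ m, n ≤ m → w ∈ S m := by
    rintro w (h | h)
    · exact ⟨0, fun m _ => Set.mem_iInter.1 h m⟩
    · obtain ⟨n, hn⟩ := Set.mem_iUnion.1 h
      exact ⟨n, fun m hm => (hpermLe n m hm hn).2⟩
  -- uniqueness for limW, translations
  have hTu : ∀ x ∈ G, ∀ k k' : ℤ,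
      x + (k : ℝ) ∈ limW U V → x + (k' : ℝ) ∈ limW U V → k = k' := by
    intro x hx k k' h h'
    obtain ⟨n, hn⟩ := hWstage _ h
    obtain ⟨n', hn'⟩ := hWstage _ h'
    exact hI1 (max n n') x hx k k' (hn _ (le_max_left _ _)) (hn' _ (le_max_right _ _))
  -- uniqueness for limW, dilations
  have hDu : ∀ x ∈ G, ∀ j j' : ℤ,
      (2 : ℝ) ^ j * x ∈ limW U V → (2 : ℝ) ^ j' * x ∈ limW U V → j = j' := by
    intro x hx j j' h h'
    obtain ⟨n, hn⟩ := hWstage _ h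
    obtain ⟨n', hn'⟩ := hWstage _ h'
    exact hI2u (max n n') x hx j j' (hn _ (le_max_left _ _)) (hn' _ (le_max_right _ _))
  -- existence for limW, translations
  have hTe : ∀ x ∈ G, ∃ k : ℤ, x + (k : ℝ) ∈ limW U V := by
    intro x hx
    by_cases hc : ∃ (n : ℕ) (k : ℤ), x + (k : ℝ) ∈ V ∩ S n
    · obtain ⟨n, k, hk⟩ := hc
      exact ⟨k, hWin n hk⟩
    · push_neg at hc
      have hcov : ∀ n, ∃ k : ℤ, x + (k : ℝ) ∈ S n := by
        intro n
        by_contra h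
        push_neg at h
        obtain ⟨k, hkV, -⟩ := hV2 x hx
        have hVn : x + (k : ℝ) ∈ V \ trsat (S n) := by
          refine ⟨hkV, ?_⟩
          rintro ⟨m, hm⟩
          have e : x + (k : ℝ) + (m : ℝ) = x + ((k + m : ℤ) : ℝ) := by push_cast; ring
          rw [e] at hm
          exact h (k + m) hm
        exact hc (n + 1) k ⟨hkV, by rw [hSsucc]; exact Or.inr hVn⟩
      obtain ⟨k0, hk0⟩ := hcov 0
      have hstay : ∀ n, x + (k0 : ℝ) ∈ S n := by
        intro n
        induction n with
        | zero => exact hk0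
        | succ n ih =>
          obtain ⟨k', hk'⟩ := hcov (n + 1)
          have hk'cases := hk'
          rw [hSsucc] at hk'cases
          rcases hk'cases with ⟨hSk', -⟩ | hVk'
          · have : k' = k0 := hI1 n x hx k' k0 hSk' ih
            rwa [this] at hk'
          · exact absurd ⟨hVk'.1, hk'⟩ (hc (n + 1) k')
      exact ⟨k0, hWall (Set.mem_iInter.2 hstay)⟩
  -- existence for limW, dilations
  have hDe : ∀ x ∈ G, ∃ j : ℤ, (2 : ℝ) ^ j * x ∈ limW U V := by
    intro x hx
    by_cases hc : ∃ (n : ℕ) (j : ℤ), (2 : ℝ) ^ j * x ∈ V ∩ S n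
    · obtain ⟨n, j, hj⟩ := hc
      exact ⟨j, hWin n hj⟩
    · push_neg at hc
      obtain ⟨j0, hj0⟩ := hI2e 0 x hx
      have hstay : ∀ n, (2 : ℝ) ^ j0 * x ∈ S n := by
        intro n
        induction n with
        | zero => exact hj0
        | succ n ih =>
          obtain ⟨j', hj'⟩ := hI2e (n + 1) x hx
          have hj'cases := hj'
          rw [hSsucc] at hj'cases
          rcases hj'cases with ⟨hSj', -⟩ | hVj'
          · have : j' = j0 := hI2u n x hx j' j0 hSj' ih
            rwa [this] at hj'
          · exact absurd ⟨hVj'.1, hj'⟩ (hc (n + 1) j')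
      exact ⟨j0, hWall (Set.mem_iInter.2 hstay)⟩
  refine ⟨?_, ?_, ?_, ?_⟩
  · intro x hx
    obtain ⟨k, hk⟩ := hTe x hx
    exact ⟨k, hk, fun y hy => hTu x hx y k hy hk⟩
  · intro x hx
    obtain ⟨j, hj⟩ := hDe x hx
    exact ⟨j, hj, fun y hy => hDu x hx y j hy hj⟩
  · rintro w (h | h)
    · exact Or.inl (Set.mem_iInter.1 h 0)
    · obtain ⟨n, hn⟩ := Set.mem_iUnion.1 h
      exact Or.inr hn.1
  · exact fun x hx => hWall (Set.mem_iInter.2 fun n => hinterS n hx)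

/-- The main construction: given `U` and `V` as in the theorem, there is a wavelet
set `W` with `F ⊆ W ⊆ U ∪ V`. -/
lemma main_construction (F U V : Set ℝ) (hF : MeasurableSet F)
    (hUm : MeasurableSet U) (hFU : F ⊆ U)
    (hU1 : PacksByTranslations U) (hU2 : TilesByDilations U)
    (hVm : MeasurableSet V) (hFV : F ⊆ V)
    (hV1 : PacksByDilations V) (hV2 : TilesByTranslations V) :
    ∃ W : Set ℝ, IsWaveletSet W ∧ F ⊆ W ∧ W ⊆ U ∪ V := by
  classical
  -- the bad set where the a.e. hypotheses fail
  set N : Set ℝ :=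
    {x | ¬ ∀ k k' : ℤ, x + (k : ℝ) ∈ U → x + (k' : ℝ) ∈ U → k = k'} ∪
    ({x | ¬ ∃! j : ℤ, (2 : ℝ) ^ j * x ∈ U} ∪
    ({x | ¬ ∀ j j' : ℤ, (2 : ℝ) ^ j * x ∈ V → (2 : ℝ) ^ j' * x ∈ V → j = j'} ∪
    ({x | ¬ ∃! k : ℤ, x + (k : ℝ) ∈ V} ∪ ({0} : Set ℝ)))) with hNdef
  have hN0 : volume N = 0 := by
    refine measure_union_null (ae_iff.1 hU1) (measure_union_null (ae_iff.1 hU2)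
      (measure_union_null (ae_iff.1 hV1) (measure_union_null (ae_iff.1 hV2) ?_)))
    simp
  obtain ⟨M, hNM, hMm, hM0⟩ := exists_measurable_superset_of_null hN0
  -- saturation of M under the countable group generated by the actions
  set sat : Set ℝ :=
    ⋃ (j : ℤ), ⋃ (q : ℚ), (fun x : ℝ => (2 : ℝ) ^ j * x + (q : ℝ)) ⁻¹' M with hsatdef
  have hsatm : MeasurableSet sat :=
    MeasurableSet.iUnion fun j => MeasurableSet.iUnion fun q =>
      hMm.preimage ((measurable_id.const_mul _).add_const _)
  have hsat0 : volume sat = 0 := by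
    refine measure_iUnion_null fun j => measure_iUnion_null fun q => ?_
    have hcomp : (fun x : ℝ => (2 : ℝ) ^ j * x + (q : ℝ)) ⁻¹' M =
        (fun x : ℝ => (2 : ℝ) ^ j * x) ⁻¹' ((fun y : ℝ => y + (q : ℝ)) ⁻¹' M) := rfl
    rw [hcomp]
    have h1 : volume ((fun y : ℝ => y + (q : ℝ)) ⁻¹' M) = 0 := by
      rw [measure_preimage_add_right]
      exact hM0
    have h2 := Real.volume_preimage_mul_left
      (by positivity : (2 : ℝ) ^ j ≠ 0) ((fun y : ℝ => y + (q : ℝ)) ⁻¹' M)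
    rw [h2, h1, mul_zero]
  set G : Set ℝ := satᶜ with hGdef
  have hGm : MeasurableSet G := hsatm.compl
  have hGc0 : volume Gᶜ = 0 := by rwa [hGdef, compl_compl]
  have hGN : ∀ x ∈ G, x ∉ M := by
    intro x hx hxM
    refine hx (Set.mem_iUnion.2 ⟨0, Set.mem_iUnion.2 ⟨0, ?_⟩⟩)
    simpa using hxM
  have hGadd : ∀ x ∈ G, ∀ k : ℤ, x + (k : ℝ) ∈ G := by
    intro x hx k hmem
    obtain ⟨j, hj⟩ := Set.mem_iUnion.1 hmem
    obtain ⟨q, hq⟩ := Set.mem_iUnion.1 hj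
    refine hx (Set.mem_iUnion.2 ⟨j, Set.mem_iUnion.2 ⟨(2 : ℚ) ^ j * (k : ℚ) + q, ?_⟩⟩)
    have e : (2 : ℝ) ^ j * x + (((2 : ℚ) ^ j * (k : ℚ) + q : ℚ) : ℝ) =
        (2 : ℝ) ^ j * (x + (k : ℝ)) + (q : ℝ) := by push_cast; ring
    show (2 : ℝ) ^ j * x + (((2 : ℚ) ^ j * (k : ℚ) + q : ℚ) : ℝ) ∈ M
    rw [e]
    exact hq
  have hGmul : ∀ x ∈ G, ∀ i : ℤ, (2 : ℝ) ^ i * x ∈ G := by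
    intro x hx i hmem
    obtain ⟨j, hj⟩ := Set.mem_iUnion.1 hmem
    obtain ⟨q, hq⟩ := Set.mem_iUnion.1 hj
    refine hx (Set.mem_iUnion.2 ⟨j + i, Set.mem_iUnion.2 ⟨q, ?_⟩⟩)
    show (2 : ℝ) ^ (j + i) * x + (q : ℝ) ∈ M
    have e : (2 : ℝ) ^ (j + i) * x + (q : ℝ) =
        (2 : ℝ) ^ j * ((2 : ℝ) ^ i * x) + (q : ℝ) := by
      rw [two_zpow_mul]
    rw [e]
    exact hq
  -- exact hypotheses on G
  have hGprop : ∀ x ∈ G,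
      (∀ k k' : ℤ, x + (k : ℝ) ∈ U → x + (k' : ℝ) ∈ U → k = k') ∧
      (∃! j : ℤ, (2 : ℝ) ^ j * x ∈ U) ∧
      (∀ j j' : ℤ, (2 : ℝ) ^ j * x ∈ V → (2 : ℝ) ^ j' * x ∈ V → j = j') ∧
      (∃! k : ℤ, x + (k : ℝ) ∈ V) := by
    intro x hx
    have hxN : x ∉ N := fun h => hGN x hx (hNM h)
    rw [hNdef] at hxN
    simp only [Set.mem_union, Set.mem_setOf_eq, not_or] at hxN
    exact ⟨not_not.1 hxN.1, not_not.1 hxN.2.1, not_not.1 hxN.2.2.1, not_not.1 hxN.2.2.2.1⟩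
  set U' : Set ℝ := U ∩ G with hU'def
  set V' : Set ℝ := V ∩ G with hV'def
  have hcon := exact_construction G U' V' Set.inter_subset_right Set.inter_subset_right
    (fun x hx k k' hk hk' => (hGprop x hx).1 k k' hk.1 hk'.1)
    (fun x hx => by
      obtain ⟨j, hj, hju⟩ := (hGprop x hx).2.1
      exact ⟨j, ⟨hj, hGmul x hx j⟩, fun y hy => hju y hy.1⟩)
    (fun x hx j j' hj hj' => (hGprop x hx).2.2.1 j j' hj.1 hj'.1)
    (fun x hx => by
      obtain ⟨k, hk, hku⟩ := (hGprop x hx).2.2.2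
      exact ⟨k, ⟨hk, hGadd x hx k⟩, fun y hy => hku y hy.1⟩)
  obtain ⟨hT, hD, hWsub, hWint⟩ := hcon
  set W' : Set ℝ := limW U' V' with hW'def
  refine ⟨W' ∪ F, ⟨?_, ?_, ?_⟩, fun x hx => Or.inr hx, ?_⟩
  · exact (measurableSet_limW (hUm.inter hGm) (hVm.inter hGm)).union hF
  · -- tiles by translations
    have key : ∀ x ∈ G, ∃! k : ℤ, x + (k : ℝ) ∈ W' ∪ F := by
      intro x hx
      obtain ⟨k, hk, hku⟩ := hT x hx
      refine ⟨k, Or.inl hk, fun y hy => ?_⟩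
      rcases hy with hy | hy
      · exact hku y hy
      · exact hku y (hWint ⟨⟨hFU hy, hGadd x hx y⟩, ⟨hFV hy, hGadd x hx y⟩⟩)
    rw [TilesByTranslations, ae_iff]
    refine measure_mono_null (fun x hx => ?_) hGc0
    simp only [Set.mem_setOf_eq] at hx
    exact fun hxG => hx (key x hxG)
  · -- tiles by dilations
    have key : ∀ x ∈ G, ∃! j : ℤ, (2 : ℝ) ^ j * x ∈ W' ∪ F := by
      intro x hx
      obtain ⟨j, hj, hju⟩ := hD x hx
      refine ⟨j, Or.inl hj, fun y hy => ?_⟩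
      rcases hy with hy | hy
      · exact hju y hy
      · exact hju y (hWint ⟨⟨hFU hy, hGmul x hx y⟩, ⟨hFV hy, hGmul x hx y⟩⟩)
    rw [TilesByDilations, ae_iff]
    refine measure_mono_null (fun x hx => ?_) hGc0
    simp only [Set.mem_setOf_eq] at hx
    exact fun hxG => hx (key x hxG)
  · rintro x (hx | hx)
    · rcases hWsub hx with h | h
      · exact Or.inl h.1
      · exact Or.inr h.1
    · exact Or.inl (hFU hx)

end WaveletAux

theorem stmt_11 (F : Set ℝ) (hF : MeasurableSet F) :
    ((∃ W : Set ℝ, IsWaveletSet W ∧ F ⊆ W) ↔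
      (PacksByTranslations F ∧ PacksByDilations F ∧
        (∃ U : Set ℝ, MeasurableSet U ∧ F ⊆ U ∧
          PacksByTranslations U ∧ TilesByDilations U) ∧
        (∃ V : Set ℝ, MeasurableSet V ∧ F ⊆ V ∧
          PacksByDilations V ∧ TilesByTranslations V))) ∧
    (∀ U V : Set ℝ,
      PacksByTranslations F → PacksByDilations F →
      MeasurableSet U → F ⊆ U → PacksByTranslations U → TilesByDilations U →
      MeasurableSet V → F ⊆ V → PacksByDilations V → TilesByTranslations V →
      ∃ W : Set ℝ, IsWaveletSet W ∧ F ⊆ W ∧ W ⊆ U ∪ V) := by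
  constructor
  · constructor
    · rintro ⟨W, ⟨hWm, hWt, hWd⟩, hFW⟩
      refine ⟨?_, ?_, ⟨W, hWm, hFW, ?_, hWd⟩, ⟨W, hWm, hFW, ?_, hWt⟩⟩
      · exact hWt.mono fun ξ h k k' hk hk' => h.unique (hFW hk) (hFW hk')
      · exact hWd.mono fun ξ h j j' hj hj' => h.unique (hFW hj) (hFW hj')
      · exact hWt.mono fun ξ h k k' hk hk' => h.unique hk hk'
      · exact hWd.mono fun ξ h j j' hj hj' => h.unique hj hj'
    · rintro ⟨-, -, ⟨U, hUm, hFU, hU1, hU2⟩, ⟨V, hVm, hFV, hV1, hV2⟩⟩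
      obtain ⟨W, hW, hFW, -⟩ :=
        WaveletAux.main_construction F U V hF hUm hFU hU1 hU2 hVm hFV hV1 hV2
      exact ⟨W, hW, hFW⟩
  · intro U V _ _ hUm hFU hU1 hU2 hVm hFV hV1 hV2
    exact WaveletAux.main_construction F U V hF hUm hFU hU1 hU2 hVm hFV hV1 hV2
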